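/- Let d ≥ 1 and let {E_i}_{i=1}^n be a rank-one POVM on ℂ^d with E_i = e_i Π_i, where e_i > 0 and each Π_i is a rank-one orthogonal projection, which forms a 2-design in the sense that Σ_{i=1}^n e_i (Π_i ⊗ Π_i) = (I_{d²} + F)/(d+1), where F is the swap matrix on ℂ^d ⊗ ℂ^d (F(x ⊗ y) = y ⊗ x) and ⊗ is the Kronecker product. Then its orthogonality is O = Σ_{i,j} (tr(√E_i √E_j))² − 2d + n = 2d/(d+1) − 2d + n, and its disturbance is D = Σ_{l,m} (tr(√E_l √E_m))² − 2 Σ_l (tr √E_l)² + d² = d²(d−1)/(d+1). -/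

import Mathlib

/-!
For an orthogonal projection `Π` and `e ≥ 0`, `√(e Π) = √e Π`, so `√E_i ⊗ √E_i = e_i (Π_i ⊗ Π_i)`
and the 2-design condition says exactly `∑ √E_i ⊗ √E_i = (I + F)/(d + 1)`. Both sums in the
theorem are traces of this operator: `∑ (tr √E_l)² = tr (∑ √E_l ⊗ √E_l)` and
`∑ tr(√E_i √E_j)² = tr ((∑ √E_i ⊗ √E_i)²)`, the latter because
`(A ⊗ A)(B ⊗ B) = AB ⊗ AB`. Since `F² = I` and `tr F = d`, they equal `d` and `2d/(d + 1)`.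
-/

open Matrix BigOperators Kronecker
open scoped ComplexOrder

/-- The positive semidefinite square root of a positive semidefinite matrix
(the Mathlib definition of December 2024, since removed from Mathlib). -/
noncomputable def Matrix.PosSemidef.sqrt {n : Type*} [Fintype n] [DecidableEq n]
    {A : Matrix n n ℂ} (hA : A.PosSemidef) : Matrix n n ℂ :=
  (hA.1.eigenvectorUnitary : Matrix n n ℂ) *
    diagonal ((↑) ∘ (Real.sqrt) ∘ hA.1.eigenvalues) *
    (star (hA.1.eigenvectorUnitary : Matrix n n ℂ))

namespace Matrix

section Sqrt

variable {n : Type*} [Fintype n]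

lemma IsHermitian.posSemidef_of_mul_self_eq {P : Matrix n n ℂ} (hP : P.IsHermitian)
    (hPP : P * P = P) : P.PosSemidef := by
  simpa [hP.eq, hPP] using posSemidef_conjTranspose_mul_self P

variable [DecidableEq n]

lemma PosSemidef.sqrt_eq_cfc {A : Matrix n n ℂ} (hA : A.PosSemidef) :
    hA.sqrt = cfc Real.sqrt A := by
  rw [hA.1.cfc_eq]
  rfl

lemma PosSemidef.isHermitian_sqrt {A : Matrix n n ℂ} (hA : A.PosSemidef) :
    hA.sqrt.IsHermitian := by
  rw [hA.sqrt_eq_cfc]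
  exact IsSelfAdjoint.cfc

lemma PosSemidef.sqrt_eq_of_mul_self_eq {A B : Matrix n n ℂ} (hA : A.PosSemidef)
    (hB : B.PosSemidef) (hBA : B * B = A) : hA.sqrt = B := by
  rw [hA.sqrt_eq_cfc, ← hBA, ← sq,
    ← cfc_comp_pow Real.sqrt 2 B Real.continuous_sqrt.continuousOn hB.1.isSelfAdjoint]
  refine (cfc_congr fun x hx => ?_).trans (cfc_id' ℝ B hB.1.isSelfAdjoint)
  rw [hB.1.spectrum_real_eq_range_eigenvalues] at hx
  obtain ⟨k, rfl⟩ := hx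
  exact Real.sqrt_sq (hB.eigenvalues_nonneg k)

lemma PosSemidef.sqrt_eq_of_eq_smul_projection {A P : Matrix n n ℂ} (hA : A.PosSemidef)
    (hP : P.IsHermitian) (hPP : P * P = P) {c : ℝ} (hc : 0 ≤ c) (hAP : A = (c : ℂ) • P) :
    hA.sqrt = ((√c : ℝ) : ℂ) • P :=
  hA.sqrt_eq_of_mul_self_eq ((hP.posSemidef_of_mul_self_eq hPP).smul (by simp)) <| by
    rw [smul_mul_smul_comm, hPP, ← Complex.ofReal_mul, Real.mul_self_sqrt hc, hAP]

end Sqrt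

section Kronecker

variable {ι n : Type*} [Fintype ι] [Fintype n]

lemma IsHermitian.ofReal_re_trace {A : Matrix n n ℂ} (hA : A.IsHermitian) :
    ((A.trace.re : ℝ) : ℂ) = A.trace :=
  Complex.conj_eq_iff_re.mp <| by
    change star A.trace = A.trace
    rw [← trace_conjTranspose, hA.eq]

lemma IsHermitian.ofReal_re_trace_mul {A B : Matrix n n ℂ} (hA : A.IsHermitian)
    (hB : B.IsHermitian) : (((A * B).trace.re : ℝ) : ℂ) = (A * B).trace :=
  Complex.conj_eq_iff_re.mp <| by
    change star (A * B).trace = (A * B).trace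
    rw [← trace_conjTranspose, conjTranspose_mul, hA.eq, hB.eq, trace_mul_comm]

lemma trace_mul_sq_eq_trace_kronecker_mul {R : Type*} [CommSemiring R] (A B : Matrix n n R) :
    (A * B).trace ^ 2 = ((A ⊗ₖ A) * (B ⊗ₖ B)).trace := by
  rw [← mul_kronecker_mul, trace_kronecker, sq]

lemma ofReal_sum_re_trace_sq {A : ι → Matrix n n ℂ} (hA : ∀ i, (A i).IsHermitian) :
    ((∑ i, (A i).trace.re ^ 2 : ℝ) : ℂ) = (∑ i, A i ⊗ₖ A i).trace := by
  push_cast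
  simp only [(hA _).ofReal_re_trace, trace_sum, trace_kronecker, sq]

variable [DecidableEq n]

lemma sum_sum_trace_mul_sq {R : Type*} [CommSemiring R] (A : ι → Matrix n n R) :
    ∑ i, ∑ j, (A i * A j).trace ^ 2 = ((∑ i, A i ⊗ₖ A i) ^ 2).trace := by
  simp only [sq (∑ i, _), Finset.sum_mul_sum, trace_sum, trace_mul_sq_eq_trace_kronecker_mul]

lemma ofReal_sum_sum_re_trace_mul_sq {A : ι → Matrix n n ℂ} (hA : ∀ i, (A i).IsHermitian) :
    ((∑ i, ∑ j, (A i * A j).trace.re ^ 2 : ℝ) : ℂ) = ((∑ i, A i ⊗ₖ A i) ^ 2).trace := by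
  push_cast
  simp only [(hA _).ofReal_re_trace_mul (hA _), sum_sum_trace_mul_sq]

end Kronecker

section Swap

variable (n : Type*) [DecidableEq n] (R : Type*) [Semiring R]

def swapMatrix : Matrix (n × n) (n × n) R :=
  of fun p q => if p.1 = q.2 ∧ p.2 = q.1 then 1 else 0

variable [Fintype n]

lemma swapMatrix_mul_self : swapMatrix n R * swapMatrix n R = 1 := by
  ext ⟨a, b⟩ ⟨c, f⟩
  simp [swapMatrix, mul_apply, one_apply, Fintype.sum_prod_type, ite_and, Prod.ext_iff]

lemma trace_swapMatrix : (swapMatrix n R).trace = Fintype.card n := by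
  simp only [swapMatrix, trace, diag_apply, of_apply, Fintype.sum_prod_type,
    and_iff_left_of_imp Eq.symm]
  simp

lemma trace_one_add_swapMatrix :
    (1 + swapMatrix n R).trace = Fintype.card n * (Fintype.card n + 1) := by
  rw [trace_add, trace_one, trace_swapMatrix, Fintype.card_prod]
  norm_cast

lemma one_add_swapMatrix_sq :
    (1 + swapMatrix n R) ^ 2 = (2 : R) • (1 + swapMatrix n R) := by
  simp only [sq, add_mul, mul_add, swapMatrix_mul_self, one_mul, mul_one, two_smul]
  abel

variable (𝕜 : Type*) [Field 𝕜] [CharZero 𝕜]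

lemma trace_inv_smul_one_add_swapMatrix :
    (((Fintype.card n : 𝕜) + 1)⁻¹ • (1 + swapMatrix n 𝕜)).trace = Fintype.card n := by
  have : (Fintype.card n : 𝕜) + 1 ≠ 0 := Nat.cast_add_one_ne_zero _
  rw [trace_smul, trace_one_add_swapMatrix, smul_eq_mul]
  field_simp

lemma trace_sq_inv_smul_one_add_swapMatrix :
    ((((Fintype.card n : 𝕜) + 1)⁻¹ • (1 + swapMatrix n 𝕜)) ^ 2).trace
      = (2 * Fintype.card n / (Fintype.card n + 1) : 𝕜) := by
  have : (Fintype.card n : 𝕜) + 1 ≠ 0 := Nat.cast_add_one_ne_zero _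
  rw [smul_pow, one_add_swapMatrix_sq, trace_smul, trace_smul, trace_one_add_swapMatrix,
    smul_eq_mul, smul_eq_mul]
  field_simp

end Swap

end Matrix

theorem two_design_povm_orthogonality_disturbance_general
    (d n : ℕ)
    (e : Fin n → ℝ) (he : ∀ i, 0 < e i)
    (P : Fin n → Matrix (Fin d) (Fin d) ℂ)
    (hproj : ∀ i, (P i).IsHermitian ∧ P i * P i = P i ∧ (P i).trace = 1)
    (E : Fin n → Matrix (Fin d) (Fin d) ℂ)
    (hEdef : ∀ i, E i = ((e i : ℝ) : ℂ) • P i)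
    (hE : ∀ i, (E i).PosSemidef)
    (F : Matrix (Fin d × Fin d) (Fin d × Fin d) ℂ)
    (hF : F = Matrix.of fun p q => if p.1 = q.2 ∧ p.2 = q.1 then 1 else 0)
    (h2design : ∑ i, ((e i : ℝ) : ℂ) • (P i ⊗ₖ P i)
      = ((d : ℂ) + 1)⁻¹ • ((1 : Matrix (Fin d × Fin d) (Fin d × Fin d) ℂ) + F)) :
    (∑ i, ∑ j, (((hE i).sqrt * (hE j).sqrt).trace.re) ^ 2 - 2 * (d : ℝ) + (n : ℝ)
        = 2 * (d : ℝ) / ((d : ℝ) + 1) - 2 * (d : ℝ) + (n : ℝ))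
    ∧ (∑ l, ∑ m, (((hE l).sqrt * (hE m).sqrt).trace.re) ^ 2
          - 2 * ∑ l, (((hE l).sqrt).trace.re) ^ 2 + (d : ℝ) ^ 2
        = (d : ℝ) ^ 2 * ((d : ℝ) - 1) / ((d : ℝ) + 1)) := by
  have hsqrt (i : Fin n) : (hE i).sqrt = ((√(e i) : ℝ) : ℂ) • P i :=
    (hE i).sqrt_eq_of_eq_smul_projection (hproj i).1 (hproj i).2.1 (he i).le (hEdef i)
  have hkron : ∑ i, (hE i).sqrt ⊗ₖ (hE i).sqrt
      = ((Fintype.card (Fin d) : ℂ) + 1)⁻¹ • (1 + swapMatrix (Fin d) ℂ) := by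
    rw [Fintype.card_fin, swapMatrix, ← hF, ← h2design]
    refine Finset.sum_congr rfl fun i _ => ?_
    rw [hsqrt, smul_kronecker, kronecker_smul, smul_smul, ← Complex.ofReal_mul,
      Real.mul_self_sqrt (he i).le]
  have horth : ∑ i, ∑ j, (((hE i).sqrt * (hE j).sqrt).trace.re) ^ 2 = 2 * d / (d + 1) := by
    apply Complex.ofReal_injective
    rw [ofReal_sum_sum_re_trace_mul_sq fun i => (hE i).isHermitian_sqrt, hkron,
      trace_sq_inv_smul_one_add_swapMatrix, Fintype.card_fin]
    push_cast
    rfl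
  have hdist : ∑ l, (((hE l).sqrt).trace.re) ^ 2 = d := by
    apply Complex.ofReal_injective
    rw [ofReal_sum_re_trace_sq fun i => (hE i).isHermitian_sqrt, hkron,
      trace_inv_smul_one_add_swapMatrix, Fintype.card_fin]
    rfl
  refine ⟨by rw [horth], ?_⟩
  rw [horth, hdist]
  field_simp
  ring

/-- For `d ≥ 1` and a rank-one POVM `{E_i = e_i Π_i}_{i=1}^n` on `ℂ^d`
(`e_i > 0`, `Π_i` rank-one orthogonal projections) forming a 2-design, i.e.
`Σ_i e_i (Π_i ⊗ Π_i) = (I + F)/(d+1)` with `F` the swap on `ℂ^d ⊗ ℂ^d`, the orthogonality is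
`O = 2d/(d+1) − 2d + n` and the disturbance is `D = d²(d−1)/(d+1)`. -/
theorem two_design_povm_orthogonality_disturbance
    (d n : ℕ) (hd : 1 ≤ d)
    (e : Fin n → ℝ) (he : ∀ i, 0 < e i)
    (P : Fin n → Matrix (Fin d) (Fin d) ℂ)
    (hproj : ∀ i, (P i).IsHermitian ∧ P i * P i = P i ∧ (P i).trace = 1)
    (E : Fin n → Matrix (Fin d) (Fin d) ℂ)
    (hEdef : ∀ i, E i = ((e i : ℝ) : ℂ) • P i)
    (hE : ∀ i, (E i).PosSemidef)
    (hsum : ∑ i, E i = 1)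
    (F : Matrix (Fin d × Fin d) (Fin d × Fin d) ℂ)
    (hF : F = Matrix.of fun p q => if p.1 = q.2 ∧ p.2 = q.1 then 1 else 0)
    (h2design : ∑ i, ((e i : ℝ) : ℂ) • (P i ⊗ₖ P i)
      = ((d : ℂ) + 1)⁻¹ • ((1 : Matrix (Fin d × Fin d) (Fin d × Fin d) ℂ) + F)) :
    (∑ i, ∑ j, (((hE i).sqrt * (hE j).sqrt).trace.re) ^ 2 - 2 * (d : ℝ) + (n : ℝ)
        = 2 * (d : ℝ) / ((d : ℝ) + 1) - 2 * (d : ℝ) + (n : ℝ))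
    ∧ (∑ l, ∑ m, (((hE l).sqrt * (hE m).sqrt).trace.re) ^ 2
          - 2 * ∑ l, (((hE l).sqrt).trace.re) ^ 2 + (d : ℝ) ^ 2
        = (d : ℝ) ^ 2 * ((d : ℝ) - 1) / ((d : ℝ) + 1)) :=
  two_design_povm_orthogonality_disturbance_general d n e he P hproj E hEdef hE F hF h2design
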